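/- arXiv:1812.08868 — 4 statements merged into one kernel-verified Lean document; each statement's English description precedes it below -/
import Mathlib

section
/- For every formal context K = (G, M, I) and every subset N ⊆ M, Σ_{g ∈ G} |{c ∈ B(K_N) : g ∈ ext(c)}| = Σ_{c ∈ B(K)_N} |ext(c)|, where K_N = (G, M\N, I ∩ (G × (M\N))) and B(K)_N = {c ∈ B(K) : (int(c) \ N)' = ext(c)}. -/
open Finset

/-- A formal context `(G, M, I)` with finite object set `G`, finite attribute
set `M`, and incidence relation `I ⊆ G × M`. -/
structure FormalContext (α β : Type*) [DecidableEq α] [DecidableEq β] where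
  G : Finset α
  M : Finset β
  I : Finset (α × β)
  inc : I ⊆ G ×ˢ M

namespace FormalContext

variable {α β : Type*} [DecidableEq α] [DecidableEq β]

/-- The derivation operator `A ↦ A' = {m ∈ M : ∀ g ∈ A, (g,m) ∈ I}`. -/
def up (K : FormalContext α β) (A : Finset α) : Finset β :=
  K.M.filter fun m => ∀ g ∈ A, (g, m) ∈ K.I

/-- The derivation operator `B ↦ B' = {g ∈ G : ∀ m ∈ B, (g,m) ∈ I}`. -/
def down (K : FormalContext α β) (B : Finset β) : Finset α :=
  K.G.filter fun g => ∀ m ∈ B, (g, m) ∈ K.I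

/-- The set `B(K)` of formal concepts of `K`: pairs `(A, B)` with `A' = B` and `B' = A`. -/
def concepts (K : FormalContext α β) : Finset (Finset α × Finset β) :=
  (K.G.powerset ×ˢ K.M.powerset).filter fun c => K.up c.1 = c.2 ∧ K.down c.2 = c.1

/-- The extent label function `ℓ_K(g) = |{c ∈ B(K) : g ∈ ext(c)}|`. -/
def label (K : FormalContext α β) (g : α) : ℕ :=
  (K.concepts.filter fun c => g ∈ c.1).card

/-- The subcontext `K_N = (G, M \ N, I ∩ (G × (M \ N)))`. -/
def removeAttrs (K : FormalContext α β) (N : Finset β) : FormalContext α β where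
  G := K.G
  M := K.M \ N
  I := K.I.filter fun p => p.2 ∉ N
  inc := by
    intro p hp
    rw [Finset.mem_filter] at hp
    have h := K.inc hp.1
    rw [Finset.mem_product] at h ⊢
    exact ⟨h.1, Finset.mem_sdiff.mpr ⟨h.2, hp.2⟩⟩

/-- `m` is relevant to the object `g` iff `ℓ_{K_{m}}(g) < ℓ_K(g)`. -/
def RelevantTo (K : FormalContext α β) (m : β) (g : α) : Prop :=
  (K.removeAttrs {m}).label g < K.label g

/-- `m` is relevant to the context `K` iff it is relevant to some object `g ∈ G`. -/
def Relevant (K : FormalContext α β) (m : β) : Prop :=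
  ∃ g ∈ K.G, K.RelevantTo m g

/-- `m` is irreducible iff there is no `X ⊆ M \ {m}` with `X' = m'`. -/
def Irreducible (K : FormalContext α β) (m : β) : Prop :=
  ¬ ∃ X ⊆ K.M \ {m}, K.down X = K.down {m}

/-- `B(K)_N = {c ∈ B(K) : (int(c) \ N)' = ext(c)}`. -/
def conceptsRes (K : FormalContext α β) (N : Finset β) : Finset (Finset α × Finset β) :=
  K.concepts.filter fun c => K.down (c.2 \ N) = c.1

/-- The relative relevance `r(m) = 1 - (Σ_{g∈G} ℓ_{K_{m}}(g)) / (Σ_{g∈G} ℓ_K(g))`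
of a single attribute `m`. -/
noncomputable def relRel (K : FormalContext α β) (m : β) : ℝ :=
  1 - (∑ g ∈ K.G, ((K.removeAttrs {m}).label g : ℝ)) / (∑ g ∈ K.G, (K.label g : ℝ))

/-- The relative relevance of an attribute set `N`,
`r(N) = 1 - (Σ_{c ∈ B(K)_N} |ext(c)|) / (Σ_{c ∈ B(K)} |ext(c)|)`. -/
noncomputable def relRelSet (K : FormalContext α β) (N : Finset β) : ℝ :=
  1 - (∑ c ∈ K.conceptsRes N, (c.1.card : ℝ)) / (∑ c ∈ K.concepts, (c.1.card : ℝ))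

/-- The Shannon object information entropy
`E_SE(K) = Σ_{g∈G} -(|g''|/|G|) log₂ (|g''|/|G|)`. -/
noncomputable def ESE (K : FormalContext α β) : ℝ :=
  ∑ g ∈ K.G, (-(((K.down (K.up {g})).card : ℝ) / (K.G.card : ℝ)) *
    Real.logb 2 (((K.down (K.up {g})).card : ℝ) / (K.G.card : ℝ)))

/-- The object information entropy `E_OE(K) = (1/|G|) Σ_{g∈G} (1 - |g''|/|G|)`. -/
noncomputable def EOE (K : FormalContext α β) : ℝ :=
  (1 / (K.G.card : ℝ)) * ∑ g ∈ K.G, (1 - ((K.down (K.up {g})).card : ℝ) / (K.G.card : ℝ))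

end FormalContext

/-- The ordinal scale `O_n = ([n], [n], ≤)`. -/
def ordinalScale (n : ℕ) : FormalContext ℕ ℕ where
  G := Finset.Icc 1 n
  M := Finset.Icc 1 n
  I := (Finset.Icc 1 n ×ˢ Finset.Icc 1 n).filter fun p => p.1 ≤ p.2
  inc := Finset.filter_subset _ _

/-- The nominal scale `N_n = ([n], [n], =)`. -/
def nominalScale (n : ℕ) : FormalContext ℕ ℕ where
  G := Finset.Icc 1 n
  M := Finset.Icc 1 n
  I := (Finset.Icc 1 n ×ˢ Finset.Icc 1 n).filter fun p => p.1 = p.2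
  inc := Finset.filter_subset _ _

/-- The contranominal scale `C_n = ([n], [n], ≠)`. -/
def contranominalScale (n : ℕ) : FormalContext ℕ ℕ where
  G := Finset.Icc 1 n
  M := Finset.Icc 1 n
  I := (Finset.Icc 1 n ×ˢ Finset.Icc 1 n).filter fun p => p.1 ≠ p.2
  inc := Finset.filter_subset _ _

/-! Double counting gives `Σ_g ℓ(g) = Σ_c |ext(c)|` for the context `K_N`. The concepts of `K_N`
correspond to `B(K)_N` by `(A, B) ↦ (A, A')`, with inverse `(A, B) ↦ (A, B \ N)`, and this
preserves extents. An extent `A` of `K_N` is an extent of `K` because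
`A ⊆ A'' ⊆ (A' \ N)' = A`. -/

namespace FormalContext

variable {α β : Type*} [DecidableEq α] [DecidableEq β] (K : FormalContext α β)

lemma up_subset (A : Finset α) : K.up A ⊆ K.M := filter_subset _ _

lemma down_subset (B : Finset β) : K.down B ⊆ K.G := filter_subset _ _

lemma down_anti {B B' : Finset β} (h : B ⊆ B') : K.down B' ⊆ K.down B := by
  intro g hg
  simp only [down, mem_filter] at hg ⊢
  exact ⟨hg.1, fun m hm => hg.2 m (h hm)⟩

lemma subset_down_up {A : Finset α} (hA : A ⊆ K.G) : A ⊆ K.down (K.up A) := by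
  intro g hg
  exact mem_filter.mpr ⟨hA hg, fun m hm => (mem_filter.mp hm).2 g hg⟩

lemma mem_concepts_iff {c : Finset α × Finset β} :
    c ∈ K.concepts ↔ K.up c.1 = c.2 ∧ K.down c.2 = c.1 := by
  simp only [concepts, mem_filter, mem_product, mem_powerset, and_iff_right_iff_imp]
  rintro ⟨hup, hdown⟩
  exact ⟨hdown ▸ K.down_subset _, hup ▸ K.up_subset _⟩

lemma fst_subset_of_mem_concepts {c : Finset α × Finset β} (hc : c ∈ K.concepts) :
    c.1 ⊆ K.G :=
  (K.mem_concepts_iff.mp hc).2 ▸ K.down_subset _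

lemma sum_label_eq_sum_card_extent :
    ∑ g ∈ K.G, K.label g = ∑ c ∈ K.concepts, c.1.card := by
  refine (sum_card_bipartiteAbove_eq_sum_card_bipartiteBelow
    (r := fun (g : α) (c : Finset α × Finset β) => g ∈ c.1)).trans
    (sum_congr rfl fun c hc => ?_)
  rw [bipartiteBelow, filter_mem_eq_inter,
    inter_eq_right.mpr (K.fst_subset_of_mem_concepts hc)]

lemma up_removeAttrs (N : Finset β) (A : Finset α) :
    (K.removeAttrs N).up A = K.up A \ N := by
  ext m
  simp only [up, removeAttrs, mem_filter, mem_sdiff]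
  constructor
  · rintro ⟨⟨hM, hm⟩, h⟩
    exact ⟨⟨hM, fun g hg => (h g hg).1⟩, hm⟩
  · rintro ⟨⟨hM, h⟩, hm⟩
    exact ⟨⟨hM, hm⟩, fun g hg => ⟨h g hg, hm⟩⟩

lemma down_removeAttrs {N B : Finset β} (h : Disjoint B N) :
    (K.removeAttrs N).down B = K.down B := by
  ext g
  simp only [down, removeAttrs, mem_filter]
  constructor
  · rintro ⟨hg, hB⟩
    exact ⟨hg, fun m hm => (hB m hm).1⟩
  · rintro ⟨hg, hB⟩
    exact ⟨hg, fun m hm => ⟨hB m hm, disjoint_left.mp h hm⟩⟩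

lemma up_sdiff_eq_of_mem_concepts_removeAttrs {N : Finset β} {c : Finset α × Finset β}
    (hc : c ∈ (K.removeAttrs N).concepts) : K.up c.1 \ N = c.2 :=
  K.up_removeAttrs N c.1 ▸ ((K.removeAttrs N).mem_concepts_iff.mp hc).1

lemma fst_up_mem_conceptsRes {N : Finset β} {c : Finset α × Finset β}
    (hc : c ∈ (K.removeAttrs N).concepts) : (c.1, K.up c.1) ∈ K.conceptsRes N := by
  have hdown : K.down (K.up c.1 \ N) = c.1 := by
    rw [← down_removeAttrs _ sdiff_disjoint, K.up_sdiff_eq_of_mem_concepts_removeAttrs hc]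
    exact ((K.removeAttrs N).mem_concepts_iff.mp hc).2
  have hclosed : K.down (K.up c.1) = c.1 :=
    ((K.down_anti sdiff_subset).trans hdown.le).antisymm
      (K.subset_down_up (hdown ▸ K.down_subset _))
  exact mem_filter.mpr ⟨K.mem_concepts_iff.mpr ⟨rfl, hclosed⟩, hdown⟩

lemma sdiff_mem_concepts_removeAttrs {N : Finset β} {c : Finset α × Finset β}
    (hc : c ∈ K.conceptsRes N) : (c.1, c.2 \ N) ∈ (K.removeAttrs N).concepts := by
  obtain ⟨hc, hres⟩ := mem_filter.mp hc
  refine (K.removeAttrs N).mem_concepts_iff.mpr ⟨?_, ?_⟩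
  · rw [up_removeAttrs, (K.mem_concepts_iff.mp hc).1]
  · rw [down_removeAttrs _ sdiff_disjoint, hres]

end FormalContext

theorem sum_label_removeAttrs_eq_sum_extent_card_general {α β : Type*}
    [DecidableEq α] [DecidableEq β]
    (K : FormalContext α β) (N : Finset β) :
    ∑ g ∈ K.G, (K.removeAttrs N).label g = ∑ c ∈ K.conceptsRes N, c.1.card := by
  refine (K.removeAttrs N).sum_label_eq_sum_card_extent.trans <|
    sum_nbij' (fun c => (c.1, K.up c.1)) (fun c => (c.1, c.2 \ N))
      (fun c => K.fst_up_mem_conceptsRes) (fun c => K.sdiff_mem_concepts_removeAttrs)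
      (fun c hc => Prod.ext rfl (K.up_sdiff_eq_of_mem_concepts_removeAttrs hc))
      (fun c hc => Prod.ext rfl ((K.mem_concepts_iff.mp (mem_filter.mp hc).1).1 ▸ rfl))
      fun c _ => rfl

/-- For every `N ⊆ M`,
`Σ_{g∈G} |{c ∈ B(K_N) : g ∈ ext(c)}| = Σ_{c ∈ B(K)_N} |ext(c)|`. -/
theorem sum_label_removeAttrs_eq_sum_extent_card {α β : Type*}
    [DecidableEq α] [DecidableEq β]
    (K : FormalContext α β) (N : Finset β) (hN : N ⊆ K.M) :
    ∑ g ∈ K.G, (K.removeAttrs N).label g = ∑ c ∈ K.conceptsRes N, c.1.card :=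
  sum_label_removeAttrs_eq_sum_extent_card_general K N
end

section
/- Let K = (G, M, I) be a formal context and S, T ⊆ M. If S ⊆ T then r(S) ≤ r(T), where r(N) = 1 − (Σ_{c ∈ B(K)_N} |ext(c)|) / (Σ_{c ∈ B(K)} |ext(c)|) is the relative relevance of the attribute set N. -/
open Finset

namespace FormalContext

variable {α β : Type*} [DecidableEq α] [DecidableEq β] (K : FormalContext α β)

theorem down_antitone : Antitone K.down := fun _ _ hB _ hg => by
  simp only [down, mem_filter] at hg ⊢
  exact ⟨hg.1, fun m hm => hg.2 m (hB hm)⟩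

theorem down_snd_of_mem_concepts {c : Finset α × Finset β} (hc : c ∈ K.concepts) :
    K.down c.2 = c.1 :=
  (mem_filter.mp hc).2.2

/-- For a concept `c`, `ext c = (int c)' ⊆ (int c \ S)' ⊆ (int c \ T)'`, so equality at `T`
forces equality at `S`. -/
theorem conceptsRes_antitone : Antitone K.conceptsRes := fun S T hST c hc => by
  obtain ⟨hcK, hcT⟩ := mem_filter.mp hc
  refine mem_filter.mpr ⟨hcK, Subset.antisymm ?_ ?_⟩
  · exact hcT ▸ K.down_antitone (sdiff_subset_sdiff Subset.rfl hST)
  · exact K.down_snd_of_mem_concepts hcK ▸ K.down_antitone sdiff_subset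

end FormalContext

theorem relRelSet_mono_general {α β : Type*} [DecidableEq α] [DecidableEq β]
    (K : FormalContext α β) (S T : Finset β)
    (hST : S ⊆ T) :
    K.relRelSet S ≤ K.relRelSet T := by
  unfold FormalContext.relRelSet
  gcongr
  exact K.conceptsRes_antitone hST

/-- If `S ⊆ T ⊆ M` then `r(S) ≤ r(T)`. -/
theorem relRelSet_mono {α β : Type*} [DecidableEq α] [DecidableEq β]
    (K : FormalContext α β) (S T : Finset β) (hS : S ⊆ K.M) (hT : T ⊆ K.M)
    (hST : S ⊆ T) :
    K.relRelSet S ≤ K.relRelSet T :=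
  relRelSet_mono_general K S T hST
end

section
/- As n → ∞, the Shannon object information entropy of the ordinal scale diverges, E_SE(O_n) → ∞, whereas the object information entropy converges, E_OE(O_n) → 1/2. -/
open Finset

/-
In the ordinal scale the closure of an object `g` is `{1, …, g}`, so the relative
closure sizes are `g / n` for `g = 1, …, n`. Hence `E_OE(O_n) = (1/n) ∑ (1 - g/n) = (1 - 1/n)/2`.
For the Shannon entropy, `-x log₂ x ≥ -x log x ≥ x (1 - x)` on `[0, 1]`, and
`∑_{g=1}^n (g/n)(1 - g/n) = (n² - 1)/(6n) ≥ (n - 1)/6`, which diverges.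
-/

open Filter

theorem Real.mul_one_sub_le_neg_mul_logb_two {x : ℝ} (hx0 : 0 ≤ x) (hx1 : x ≤ 1) :
    x * (1 - x) ≤ -x * Real.logb 2 x := by
  rcases hx0.eq_or_lt with rfl | hx
  · simp
  have hlog : Real.log x ≤ x - 1 := Real.log_le_sub_one_of_pos hx
  have hlog_nonpos : Real.log x ≤ 0 := Real.log_nonpos hx0 hx1
  have hlog2_pos : 0 < Real.log 2 := Real.log_pos one_lt_two
  have hlog2_lt_one : Real.log 2 < 1 := by linarith [Real.log_two_lt_d9]
  have hlogb : Real.logb 2 x ≤ Real.log x := by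
    rw [Real.logb, div_le_iff₀ hlog2_pos]
    nlinarith
  have key : 1 - x ≤ -Real.logb 2 x := by linarith
  nlinarith [mul_le_mul_of_nonneg_left key hx0]

namespace FormalContext

variable {α β : Type*} [DecidableEq α] [DecidableEq β]

noncomputable def closureRatio (K : FormalContext α β) (g : α) : ℝ :=
  ((K.down (K.up {g})).card : ℝ) / (K.G.card : ℝ)

theorem closureRatio_nonneg (K : FormalContext α β) (g : α) : 0 ≤ K.closureRatio g := by
  unfold closureRatio
  positivity

theorem closureRatio_le_one (K : FormalContext α β) (g : α) : K.closureRatio g ≤ 1 :=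
  div_le_one_of_le₀ (mod_cast card_filter_le _ _) (Nat.cast_nonneg _)

theorem ESE_eq (K : FormalContext α β) :
    K.ESE = ∑ g ∈ K.G, -K.closureRatio g * Real.logb 2 (K.closureRatio g) :=
  rfl

theorem EOE_eq (K : FormalContext α β) :
    K.EOE = (1 / (K.G.card : ℝ)) * ∑ g ∈ K.G, (1 - K.closureRatio g) :=
  rfl

theorem sum_closureRatio_mul_one_sub_le_ESE (K : FormalContext α β) :
    ∑ g ∈ K.G, K.closureRatio g * (1 - K.closureRatio g) ≤ K.ESE := by
  rw [ESE_eq]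
  exact sum_le_sum fun g _ =>
    Real.mul_one_sub_le_neg_mul_logb_two (K.closureRatio_nonneg g) (K.closureRatio_le_one g)

end FormalContext

theorem sum_Icc_one_natCast (n : ℕ) : ∑ g ∈ Icc 1 n, (g : ℝ) = n * (n + 1) / 2 := by
  induction n with
  | zero => simp
  | succ n ih =>
    rw [sum_Icc_succ_top (by omega), ih]
    push_cast
    ring

theorem sum_Icc_one_natCast_sq (n : ℕ) :
    ∑ g ∈ Icc 1 n, (g : ℝ) ^ 2 = n * (n + 1) * (2 * n + 1) / 6 := by
  induction n with
  | zero => simp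
  | succ n ih =>
    rw [sum_Icc_succ_top (by omega), ih]
    push_cast
    ring

theorem ordinalScale_G (n : ℕ) : (ordinalScale n).G = Icc 1 n :=
  rfl

theorem ordinalScale_card_G (n : ℕ) : ((ordinalScale n).G.card : ℝ) = n := by
  simp [ordinalScale_G]

theorem ordinalScale_closure {n g : ℕ} (hg : g ∈ Icc 1 n) :
    (ordinalScale n).down ((ordinalScale n).up {g}) = Icc 1 g := by
  rw [mem_Icc] at hg
  ext h
  rw [FormalContext.down, mem_filter]
  simp only [ordinalScale, FormalContext.up, mem_filter, mem_Icc,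
    mem_singleton, mem_product, forall_eq]
  constructor
  · rintro ⟨⟨h1, -⟩, H⟩
    exact ⟨h1, (H g ⟨hg, ⟨hg, hg⟩, le_rfl⟩).2⟩
  · rintro ⟨h1, hhg⟩
    refine ⟨⟨h1, hhg.trans hg.2⟩, ?_⟩
    rintro m ⟨hm, -, hgm⟩
    exact ⟨⟨⟨h1, hhg.trans hg.2⟩, hm⟩, hhg.trans hgm⟩

theorem ordinalScale_closureRatio {n g : ℕ} (hg : g ∈ Icc 1 n) :
    (ordinalScale n).closureRatio g = g / n := by
  rw [FormalContext.closureRatio, ordinalScale_closure hg, ordinalScale_card_G]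
  simp

theorem ordinalScale_EOE {n : ℕ} (hn : n ≠ 0) : (ordinalScale n).EOE = (1 - 1 / n) / 2 := by
  have hn' : (n : ℝ) ≠ 0 := Nat.cast_ne_zero.mpr hn
  rw [FormalContext.EOE_eq, ordinalScale_card_G,
    sum_congr rfl fun g hg => by rw [ordinalScale_closureRatio hg],
    sum_sub_distrib, ← sum_div, ordinalScale_G, sum_Icc_one_natCast]
  simp only [sum_const, Nat.card_Icc, add_tsub_cancel_right, nsmul_eq_mul, mul_one]
  field_simp
  ring

theorem ordinalScale_sum_closureRatio_mul_one_sub {n : ℕ} (hn : n ≠ 0) :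
    ∑ g ∈ (ordinalScale n).G,
        (ordinalScale n).closureRatio g * (1 - (ordinalScale n).closureRatio g) =
      ((n : ℝ) ^ 2 - 1) / (6 * n) := by
  have hn' : (n : ℝ) ≠ 0 := Nat.cast_ne_zero.mpr hn
  have hsummand : ∀ g : ℕ, (g / n : ℝ) * (1 - g / n) = g / n - g ^ 2 / n ^ 2 := fun g => by
    field_simp
  rw [sum_congr rfl fun g hg => by rw [ordinalScale_closureRatio hg, hsummand], sum_sub_distrib,
    ordinalScale_G, ← sum_div, ← sum_div, sum_Icc_one_natCast, sum_Icc_one_natCast_sq]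
  field_simp
  ring

theorem sub_one_div_six_le_ordinalScale_ESE (n : ℕ) :
    ((n : ℝ) - 1) / 6 ≤ (ordinalScale n).ESE := by
  refine le_trans ?_ (ordinalScale n).sum_closureRatio_mul_one_sub_le_ESE
  rcases Nat.eq_zero_or_pos n with rfl | hn
  · norm_num [ordinalScale_G]
  rw [ordinalScale_sum_closureRatio_mul_one_sub hn.ne',
    div_le_div_iff₀ (by norm_num) (by positivity)]
  have : (1 : ℝ) ≤ n := mod_cast hn
  nlinarith

/-- As `n → ∞`, `E_SE(O_n) → ∞` while `E_OE(O_n) → 1/2`. -/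
theorem ordinalScale_entropy_limits :
    Filter.Tendsto (fun n : ℕ => (ordinalScale n).ESE) Filter.atTop Filter.atTop ∧
    Filter.Tendsto (fun n : ℕ => (ordinalScale n).EOE) Filter.atTop
      (nhds (1 / 2 : ℝ)) := by
  constructor
  · refine tendsto_atTop_mono sub_one_div_six_le_ordinalScale_ESE ?_
    exact (tendsto_atTop_add_const_right _ (-1) tendsto_natCast_atTop_atTop).atTop_div_const
      (by norm_num)
  · have hlim : Tendsto (fun n : ℕ => (1 - 1 / (n : ℝ)) / 2) atTop (nhds (1 / 2)) := by
      simpa using (tendsto_one_div_atTop_nhds_zero_nat.const_sub (1 : ℝ)).div_const 2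
    refine hlim.congr' ?_
    filter_upwards [eventually_ne_atTop 0] with n hn
    exact (ordinalScale_EOE hn).symm
end

section
/- For the contranominal scale C_n = ([n], [n], ≠) with n ≥ 2 and every attribute m ∈ [n], the relative relevance equals r(m) = 1 − (Σ_{k=0}^{n} C(n,k)·(n−k) − Σ_{k=0}^{n−1} C(n−1,k)·(n−1−k)) / (Σ_{k=0}^{n} C(n,k)·(n−k)); in particular all attributes of the contranominal scale have the same relative relevance. -/
open Finset

section AuxRelRel

open Finset

private lemma sum_label_eq' {α β : Type*} [DecidableEq α] [DecidableEq β]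
    (K : FormalContext α β) :
    ∑ g ∈ K.G, K.label g = ∑ c ∈ K.concepts, c.1.card := by
  unfold FormalContext.label
  simp_rw [Finset.card_filter]
  rw [Finset.sum_comm]
  refine Finset.sum_congr rfl fun c hc => ?_
  have hsub : c.1 ⊆ K.G := by
    have h := (Finset.mem_filter.1 hc).1
    rw [Finset.mem_product] at h
    exact Finset.mem_powerset.1 h.1
  rw [← Finset.card_filter, Finset.filter_mem_eq_inter, Finset.inter_eq_right.2 hsub]

private lemma contra_mem_I {n g m : ℕ} :
    (g, m) ∈ (contranominalScale n).I ↔ g ∈ Icc 1 n ∧ m ∈ Icc 1 n ∧ g ≠ m := by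
  simp [contranominalScale, Finset.mem_filter, Finset.mem_product, and_assoc]

private lemma contra_up {n : ℕ} {A : Finset ℕ} (hA : A ⊆ Icc 1 n) :
    (contranominalScale n).up A = Icc 1 n \ A := by
  ext x
  simp only [FormalContext.up, Finset.mem_filter, Finset.mem_sdiff]
  constructor
  · rintro ⟨hx, h⟩
    exact ⟨hx, fun hxA => (contra_mem_I.1 (h x hxA)).2.2 rfl⟩
  · rintro ⟨hx, hxA⟩
    exact ⟨hx, fun g hg => contra_mem_I.2 ⟨hA hg, hx, fun e => hxA (e ▸ hg)⟩⟩

private lemma contra_down {n : ℕ} {B : Finset ℕ} (hB : B ⊆ Icc 1 n) :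
    (contranominalScale n).down B = Icc 1 n \ B := by
  ext x
  simp only [FormalContext.down, Finset.mem_filter, Finset.mem_sdiff]
  constructor
  · rintro ⟨hx, h⟩
    exact ⟨hx, fun hxB => (contra_mem_I.1 (h x hxB)).2.2 rfl⟩
  · rintro ⟨hx, hxB⟩
    exact ⟨hx, fun g hg => contra_mem_I.2 ⟨hx, hB hg, fun e => hxB (e ▸ hg)⟩⟩

private lemma contra_concepts (n : ℕ) :
    (contranominalScale n).concepts
      = (Icc 1 n).powerset.image (fun A => (A, Icc 1 n \ A)) := by
  ext c
  simp only [FormalContext.concepts, Finset.mem_filter, Finset.mem_product,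
    Finset.mem_powerset, Finset.mem_image]
  constructor
  · rintro ⟨⟨h1, h2⟩, hu, hd⟩
    refine ⟨c.1, h1, ?_⟩
    have h : (Icc 1 n : Finset ℕ) \ c.1 = c.2 := by rw [← contra_up h1]; exact hu
    simp only [h]
  · rintro ⟨A, hA, rfl⟩
    exact ⟨⟨hA, sdiff_subset⟩, contra_up hA,
      by rw [contra_down sdiff_subset, Finset.sdiff_sdiff_eq_self hA]⟩

private lemma contra_mem_I' {n g m a : ℕ} :
    (g, m) ∈ ((contranominalScale n).removeAttrs {a}).I ↔
      (g ∈ Icc 1 n ∧ m ∈ Icc 1 n ∧ g ≠ m) ∧ m ≠ a := by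
  simp only [FormalContext.removeAttrs, Finset.mem_filter, Finset.mem_singleton]
  rw [contra_mem_I]

private lemma contra'_up {n a : ℕ} {A : Finset ℕ} (hA : A ⊆ Icc 1 n) :
    ((contranominalScale n).removeAttrs {a}).up A = (Icc 1 n \ {a}) \ A := by
  ext x
  have hM : ((contranominalScale n).removeAttrs {a}).M = Icc 1 n \ {a} := rfl
  simp only [FormalContext.up, hM, Finset.mem_filter, Finset.mem_sdiff,
    Finset.mem_singleton]
  constructor
  · rintro ⟨⟨hx, hxa⟩, h⟩
    exact ⟨⟨hx, hxa⟩, fun hxA => ((contra_mem_I'.1 (h x hxA)).1.2.2 rfl)⟩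
  · rintro ⟨⟨hx, hxa⟩, hxA⟩
    exact ⟨⟨hx, hxa⟩, fun g hg =>
      contra_mem_I'.2 ⟨⟨hA hg, hx, fun e => hxA (e ▸ hg)⟩, hxa⟩⟩

private lemma contra'_down {n a : ℕ} {B : Finset ℕ} (hB : B ⊆ Icc 1 n \ {a}) :
    ((contranominalScale n).removeAttrs {a}).down B = Icc 1 n \ B := by
  ext x
  have hG : ((contranominalScale n).removeAttrs {a}).G = Icc 1 n := rfl
  simp only [FormalContext.down, hG, Finset.mem_filter, Finset.mem_sdiff]
  constructor
  · rintro ⟨hx, h⟩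
    exact ⟨hx, fun hxB => (contra_mem_I'.1 (h x hxB)).1.2.2 rfl⟩
  · rintro ⟨hx, hxB⟩
    refine ⟨hx, fun g hg => ?_⟩
    have hg' := Finset.mem_sdiff.1 (hB hg)
    exact contra_mem_I'.2 ⟨⟨hx, hg'.1, fun e => hxB (e ▸ hg)⟩,
      fun e => hg'.2 (Finset.mem_singleton.2 e)⟩

private lemma sdiff_singleton_sdiff {n a : ℕ} {A : Finset ℕ} (ha : a ∈ A) :
    (Icc 1 n \ {a}) \ A = Icc 1 n \ A := by
  ext x
  simp only [Finset.mem_sdiff, Finset.mem_singleton]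
  constructor
  · rintro ⟨⟨hx, _⟩, hxA⟩; exact ⟨hx, hxA⟩
  · rintro ⟨hx, hxA⟩; exact ⟨⟨hx, fun e => hxA (e ▸ ha)⟩, hxA⟩

private lemma contra'_concepts {n a : ℕ} (ha : a ∈ Icc 1 n) :
    ((contranominalScale n).removeAttrs {a}).concepts
      = ((Icc 1 n).powerset.filter fun A => a ∈ A).image
          (fun A => (A, Icc 1 n \ A)) := by
  have hG : ((contranominalScale n).removeAttrs {a}).G = Icc 1 n := rfl
  have hM : ((contranominalScale n).removeAttrs {a}).M = Icc 1 n \ {a} := rfl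
  ext c
  simp only [FormalContext.concepts, hG, hM, Finset.mem_filter, Finset.mem_product,
    Finset.mem_powerset, Finset.mem_image]
  constructor
  · rintro ⟨⟨h1, h2⟩, hu, hd⟩
    have hdown : c.1 = Icc 1 n \ c.2 := by rw [← contra'_down h2, hd]
    have haC : a ∈ c.1 := by
      rw [hdown, Finset.mem_sdiff]
      refine ⟨ha, fun haB => ?_⟩
      exact (Finset.mem_sdiff.1 (h2 haB)).2 (Finset.mem_singleton.2 rfl)
    refine ⟨c.1, ⟨h1, haC⟩, ?_⟩
    have h : Icc 1 n \ c.1 = c.2 := by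
      rw [← sdiff_singleton_sdiff haC, ← contra'_up h1]; exact hu
    simp only [h]
  · rintro ⟨A, hA, rfl⟩
    obtain ⟨hA, haA⟩ := hA
    refine ⟨⟨hA, fun x hx => ?_⟩, ?_, ?_⟩
    · rw [Finset.mem_sdiff] at hx ⊢
      exact ⟨hx.1, fun hxa => hx.2 ((Finset.mem_singleton.1 hxa) ▸ haA)⟩
    · rw [contra'_up hA, sdiff_singleton_sdiff haA]
    · have hsub : Icc 1 n \ A ⊆ Icc 1 n \ {a} := by
        intro x hx
        rw [Finset.mem_sdiff] at hx ⊢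
        exact ⟨hx.1, fun hxa => hx.2 ((Finset.mem_singleton.1 hxa) ▸ haA)⟩
      rw [contra'_down hsub, Finset.sdiff_sdiff_eq_self hA]

private lemma two_mul_sum_powerset_card {α : Type*} [DecidableEq α] (s : Finset α) :
    2 * ∑ A ∈ s.powerset, A.card = s.card * 2 ^ s.card := by
  induction s using Finset.induction_on with
  | empty => simp
  | @insert a s ha ih =>
    have hdisj : Disjoint s.powerset (Finset.image (insert a) s.powerset) := by
      rw [Finset.disjoint_left]
      rintro A hA hA'
      obtain ⟨B, hB, rfl⟩ := Finset.mem_image.1 hA'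
      exact ha (Finset.mem_powerset.1 hA (Finset.mem_insert_self a B))
    have hinj : ∀ x ∈ s.powerset, ∀ y ∈ s.powerset, insert a x = insert a y → x = y := by
      intro x hx y hy h
      have hax : a ∉ x := fun h' => ha (Finset.mem_powerset.1 hx h')
      have hay : a ∉ y := fun h' => ha (Finset.mem_powerset.1 hy h')
      rw [← Finset.erase_insert hax, h, Finset.erase_insert hay]
    have himg : ∑ A ∈ Finset.image (insert a) s.powerset, A.card
        = (∑ A ∈ s.powerset, A.card) + 2 ^ s.card := by
      rw [Finset.sum_image hinj]
      rw [Finset.sum_congr rfl fun A hA => Finset.card_insert_of_notMem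
        (fun h' => ha (Finset.mem_powerset.1 hA h')), Finset.sum_add_distrib,
        Finset.sum_const, smul_eq_mul, mul_one, Finset.card_powerset]
    rw [Finset.powerset_insert, Finset.sum_union hdisj, himg,
      Finset.card_insert_of_notMem ha]
    set S := ∑ A ∈ s.powerset, A.card with hS
    calc 2 * (S + (S + 2 ^ s.card)) = 2 * S + 2 * S + 2 * 2 ^ s.card := by ring
    _ = s.card * 2 ^ s.card + s.card * 2 ^ s.card + 2 * 2 ^ s.card := by rw [ih]
    _ = (s.card + 1) * 2 ^ (s.card + 1) := by rw [pow_succ]; ring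

private lemma powerset_filter_mem_eq {α : Type*} [DecidableEq α] {s : Finset α} {a : α}
    (ha : a ∈ s) :
    s.powerset.filter (fun A => a ∈ A) = (s.erase a).powerset.image (insert a) := by
  ext A
  simp only [Finset.mem_filter, Finset.mem_powerset, Finset.mem_image]
  constructor
  · rintro ⟨hAs, haA⟩
    exact ⟨A.erase a, Finset.erase_subset_erase _ hAs, Finset.insert_erase haA⟩
  · rintro ⟨B, hB, rfl⟩
    exact ⟨Finset.insert_subset ha (hB.trans (Finset.erase_subset _ _)),
      Finset.mem_insert_self _ _⟩

private lemma sum_card_filter_mem {α : Type*} [DecidableEq α] {s : Finset α} {a : α}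
    (ha : a ∈ s) :
    ∑ A ∈ s.powerset.filter (fun A => a ∈ A), A.card
      = (∑ A ∈ (s.erase a).powerset, A.card) + 2 ^ (s.erase a).card := by
  rw [powerset_filter_mem_eq ha]
  have hinj : ∀ x ∈ (s.erase a).powerset, ∀ y ∈ (s.erase a).powerset,
      insert a x = insert a y → x = y := by
    intro x hx y hy h
    have hax : a ∉ x := fun h' => Finset.notMem_erase a s (Finset.mem_powerset.1 hx h')
    have hay : a ∉ y := fun h' => Finset.notMem_erase a s (Finset.mem_powerset.1 hy h')
    rw [← Finset.erase_insert hax, h, Finset.erase_insert hay]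
  rw [Finset.sum_image hinj,
    Finset.sum_congr rfl fun A hA => Finset.card_insert_of_notMem
      (fun h' => Finset.notMem_erase a s (Finset.mem_powerset.1 hA h')),
    Finset.sum_add_distrib, Finset.sum_const, smul_eq_mul, mul_one, Finset.card_powerset]

private lemma sum_choose_mul_sub (p : ℕ) :
    ∑ k ∈ Finset.range (p + 2), (p + 1).choose k * (p + 1 - k) = (p + 1) * 2 ^ p := by
  have h : ∀ k, (p + 1).choose k * (p + 1 - k) = (p + 1) * p.choose k := fun k => by
    rw [← Nat.choose_succ_right_eq, ← Nat.add_one_mul_choose_eq]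
  simp_rw [h]
  rw [← Finset.mul_sum, Finset.sum_range_succ, Nat.choose_eq_zero_of_lt (by omega),
    add_zero, Nat.sum_range_choose]

end AuxRelRel

/-- For the contranominal scale `C_n` (`n ≥ 2`) and every `m ∈ [n]`,
`r(m) = 1 − (Σ_{k=0}^{n} C(n,k)(n−k) − Σ_{k=0}^{n−1} C(n−1,k)(n−1−k)) /
(Σ_{k=0}^{n} C(n,k)(n−k))`; all attributes have the same relative relevance. -/
theorem relRel_contranominalScale (n : ℕ) (hn : 2 ≤ n) :
    (∀ m ∈ Finset.Icc 1 n,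
      (contranominalScale n).relRel m =
        1 - ((∑ k ∈ Finset.range (n + 1), (n.choose k : ℝ) * ((n : ℝ) - k)) -
              ∑ k ∈ Finset.range n, ((n - 1).choose k : ℝ) * ((n : ℝ) - 1 - k)) /
            (∑ k ∈ Finset.range (n + 1), (n.choose k : ℝ) * ((n : ℝ) - k))) ∧
    (∀ m ∈ Finset.Icc 1 n, ∀ m' ∈ Finset.Icc 1 n,
      (contranominalScale n).relRel m = (contranominalScale n).relRel m') := by

  obtain ⟨p, rfl⟩ : ∃ p, n = p + 2 := ⟨n - 2, by omega⟩
  have e32 : p + 1 + 2 = p + 2 + 1 := by omega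
  have hnat1 : ∑ k ∈ Finset.range (p + 2 + 1), (p + 2).choose k * (p + 2 - k)
      = (p + 2) * 2 ^ (p + 1) := by rw [← e32]; exact sum_choose_mul_sub (p + 1)
  have hnat2 : ∑ k ∈ Finset.range (p + 2), (p + 1).choose k * (p + 1 - k)
      = (p + 1) * 2 ^ p := sum_choose_mul_sub p
  have hR1 : ∑ k ∈ Finset.range (p + 2 + 1),
        ((p + 2).choose k : ℝ) * (((p + 2 : ℕ) : ℝ) - (k : ℝ))
      = (((p + 2) * 2 ^ (p + 1) : ℕ) : ℝ) := by
    rw [← hnat1, Nat.cast_sum]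
    refine Finset.sum_congr rfl fun k hk => ?_
    have hk' : k ≤ p + 2 := by have := Finset.mem_range.1 hk; omega
    push_cast [Nat.cast_sub hk']
    ring
  have hR2 : ∑ k ∈ Finset.range (p + 2),
        ((p + 2 - 1).choose k : ℝ) * (((p + 2 : ℕ) : ℝ) - 1 - (k : ℝ))
      = (((p + 1) * 2 ^ p : ℕ) : ℝ) := by
    rw [← hnat2, Nat.cast_sum]
    refine Finset.sum_congr rfl fun k hk => ?_
    have hk' : k ≤ p + 1 := by have := Finset.mem_range.1 hk; omega
    have h1 : p + 2 - 1 = p + 1 := by omega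
    rw [h1]
    push_cast [Nat.cast_sub hk']
    ring
  have key : ∀ m ∈ Finset.Icc 1 (p + 2),
      (contranominalScale (p + 2)).relRel m =
        1 - (((p + 1) * 2 ^ p + 2 ^ (p + 1) : ℕ) : ℝ)
            / (((p + 2) * 2 ^ (p + 1) : ℕ) : ℝ) := by
    intro m hm
    have hcard : (Icc 1 (p + 2)).card = p + 2 := by simp
    have hcard' : ((Icc 1 (p + 2)).erase m).card = p + 1 := by
      rw [Finset.card_erase_of_mem hm, hcard]
      omega
    have hS : ∑ A ∈ (Icc 1 (p + 2)).powerset, A.card = (p + 2) * 2 ^ (p + 1) := by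
      refine Nat.eq_of_mul_eq_mul_left (show 0 < 2 by norm_num) ?_
      rw [two_mul_sum_powerset_card, hcard, pow_succ]
      ring
    have hS' : ∑ A ∈ ((Icc 1 (p + 2)).erase m).powerset, A.card = (p + 1) * 2 ^ p := by
      refine Nat.eq_of_mul_eq_mul_left (show 0 < 2 by norm_num) ?_
      rw [two_mul_sum_powerset_card, hcard', pow_succ]
      ring
    have hpinj : ∀ x ∈ (Icc 1 (p + 2)).powerset, ∀ y ∈ (Icc 1 (p + 2)).powerset,
        (fun A => (A, Icc 1 (p + 2) \ A)) x = (fun A => (A, Icc 1 (p + 2) \ A)) y →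
          x = y :=
      fun x _ y _ h => congrArg Prod.fst h
    have hpinj' : ∀ x ∈ (Icc 1 (p + 2)).powerset.filter (fun A => m ∈ A),
        ∀ y ∈ (Icc 1 (p + 2)).powerset.filter (fun A => m ∈ A),
        (fun A => (A, Icc 1 (p + 2) \ A)) x = (fun A => (A, Icc 1 (p + 2) \ A)) y →
          x = y :=
      fun x _ y _ h => congrArg Prod.fst h
    have hL : ∑ g ∈ (contranominalScale (p + 2)).G, (contranominalScale (p + 2)).label g
        = (p + 2) * 2 ^ (p + 1) := by
      rw [sum_label_eq', contra_concepts, Finset.sum_image hpinj]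
      exact hS
    have hL' : ∑ g ∈ (contranominalScale (p + 2)).G,
        ((contranominalScale (p + 2)).removeAttrs {m}).label g
        = (p + 1) * 2 ^ p + 2 ^ (p + 1) := by
      have hGeq : (contranominalScale (p + 2)).G
          = ((contranominalScale (p + 2)).removeAttrs {m}).G := rfl
      rw [hGeq, sum_label_eq', contra'_concepts hm, Finset.sum_image hpinj',
        sum_card_filter_mem hm, hS', hcard']
    simp only [FormalContext.relRel]
    rw [← Nat.cast_sum, ← Nat.cast_sum, hL, hL']
  have final : 1 - (((p + 1) * 2 ^ p + 2 ^ (p + 1) : ℕ) : ℝ)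
        / (((p + 2) * 2 ^ (p + 1) : ℕ) : ℝ)
      = 1 - ((((p + 2) * 2 ^ (p + 1) : ℕ) : ℝ) - (((p + 1) * 2 ^ p : ℕ) : ℝ))
          / (((p + 2) * 2 ^ (p + 1) : ℕ) : ℝ) := by
    have hnum : (((p + 1) * 2 ^ p + 2 ^ (p + 1) : ℕ) : ℝ)
        = (((p + 2) * 2 ^ (p + 1) : ℕ) : ℝ) - (((p + 1) * 2 ^ p : ℕ) : ℝ) := by
      push_cast
      ring
    rw [hnum]
  refine ⟨fun m hm => ?_, fun m hm m' hm' => ?_⟩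
  · rw [key m hm, hR1, hR2]
    exact final
  · rw [key m hm, key m' hm']
end
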